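/- Let ε ∈ {−1,1}, z ∈ ℤ, and define G(k) = k·x(k) − ε(2k+1)(1+2z)·x(k−1) + (k+1)·x(k−2) for a polynomial x. If x(k) = y(k)(k+1)(k+2) with y ∈ ℤ[k], then for every integer n > 1, Σ_{k=0}^{n-1} G(k)·ε^k·S_k(z) = n(n²−1)·( y(n−1)·ε^{n-1}·S_{n−1}(z) − y(n−2)·ε^n·S_n(z) ); in particular this sum is divisible by n(n²−1). -/

import Mathlib

open Finset

/-- Large Schröder polynomial `S_n(z)`. -/
noncomputable def schroederS (n : ℕ) (z : ℚ) : ℚ :=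
  ∑ k ∈ Finset.range (n + 1),
    (n.choose k : ℚ) * ((n + k).choose k : ℚ) * z ^ k / (k + 1)

/-- Little Schröder polynomial `s_n(z)`. -/
noncomputable def schroederLittle (n : ℕ) (z : ℚ) : ℚ :=
  ∑ k ∈ Finset.Icc 1 n,
    (1 / (n : ℚ)) * (n.choose k : ℚ) * (n.choose (k - 1) : ℚ) * z ^ (k - 1) * (z + 1) ^ (n - k)

/-- Central Delannoy polynomial `D_n(z)`. -/
noncomputable def delannoy (n : ℕ) (z : ℚ) : ℚ :=
  ∑ k ∈ Finset.range (n + 1), (n.choose k : ℚ) * ((n + k).choose k : ℚ) * z ^ k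

/-!
The sequence `a k = ε ^ k * S_k(z)` satisfies the three-term recurrence
`(k + 2) a (k + 1) = ε (1 + 2z) (2k + 1) a k - (k - 1) a (k - 1)` (this uses `ε ^ 2 = 1`), and `G`
is the adjoint of this recurrence operator applied to `x`. Summation by parts therefore leaves only
boundary terms; those at the lower end vanish because `x (-1) = x (-2) = 0`, and those at the upper
end are `n (n ^ 2 - 1)` times an integer, since `C(n, k) C(n + k, k) / (k + 1) = C(n + k, 2k) Cat_k`
makes `S_n(z)` an integer for integral `z`.
-/

namespace Nat

/- Unlike `Nat.choose_succ_right_eq` and `Nat.choose_mul_succ_eq`, the subtraction here is not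
truncated: for `n < k` both sides vanish. -/
theorem cast_choose_succ_right_mul {K : Type*} [CommRing K] (n k : ℕ) :
    (n.choose (k + 1) : K) * (k + 1) = n.choose k * (n - k) := by
  rcases le_or_gt k n with h | h
  · have := congrArg (Nat.cast : ℕ → K) (choose_succ_right_eq n k)
    push_cast [Nat.cast_sub h] at this
    exact this
  · simp [choose_eq_zero_of_lt h, choose_eq_zero_of_lt (h.trans (lt_add_one k))]

theorem cast_choose_mul_succ {K : Type*} [CommRing K] (n k : ℕ) :
    (n.choose k : K) * (n + 1) = (n + 1).choose k * (n + 1 - k) := by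
  rcases le_or_gt k (n + 1) with h | h
  · have := congrArg (Nat.cast : ℕ → K) (choose_mul_succ_eq n k)
    push_cast [Nat.cast_sub h] at this
    exact this
  · simp [choose_eq_zero_of_lt h, choose_eq_zero_of_lt ((lt_add_one n).trans h)]

end Nat

noncomputable def schroederCoeff (n k : ℕ) : ℚ :=
  (n.choose k : ℚ) * ((n + k).choose k : ℚ) / (k + 1)

theorem schroederCoeff_zero_right (n : ℕ) : schroederCoeff n 0 = 1 := by
  simp [schroederCoeff]

theorem schroederCoeff_eq_zero_of_lt {n k : ℕ} (h : n < k) : schroederCoeff n k = 0 := by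
  simp [schroederCoeff, Nat.choose_eq_zero_of_lt h]

theorem schroederCoeff_succ_left_mul (n k : ℕ) :
    schroederCoeff (n + 1) k * (n + 1 - k) = schroederCoeff n k * (n + k + 1) := by
  have h₁ := Nat.cast_choose_mul_succ (K := ℚ) n k
  have h₂ := Nat.cast_choose_mul_succ (K := ℚ) (n + k) k
  push_cast at h₂
  simp only [schroederCoeff, div_mul_eq_mul_div, show n + 1 + k = n + k + 1 by ring]
  congr 1
  linear_combination -((n + k + 1).choose k : ℚ) * h₁ - (n.choose k : ℚ) * h₂

theorem schroederCoeff_succ_right_mul (n k : ℕ) :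
    schroederCoeff n (k + 1) * ((k + 2) * (k + 1)) =
      schroederCoeff n k * ((n - k) * (n + k + 1)) := by
  have h₁ := Nat.cast_choose_succ_right_mul (K := ℚ) n k
  have h₂ := congrArg (Nat.cast : ℕ → ℚ) (Nat.add_one_mul_choose_eq (n + k) k)
  push_cast at h₂
  simp only [schroederCoeff, show n + (k + 1) = n + k + 1 by ring]
  field_simp
  push_cast
  linear_combination ((k + 2) * (n + k + 1).choose (k + 1) * (k + 1) : ℚ) * h₁
    - ((k + 2) * n.choose k * (n - k) : ℚ) * h₂

/- Multiplied by `(k + 2) (k + 1) (m + k + 2)`, each of the four coefficients becomes a polynomial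
multiple of `schroederCoeff (m + 1) k`. -/
theorem schroederCoeff_recurrence (m k : ℕ) :
    (m + 3) * schroederCoeff (m + 2) (k + 1) + m * schroederCoeff m (k + 1) =
      (2 * m + 3) * (schroederCoeff (m + 1) (k + 1) + 2 * schroederCoeff (m + 1) k) := by
  have F₁ := schroederCoeff_succ_right_mul (m + 1) k
  have F₂ := schroederCoeff_succ_left_mul (m + 1) k
  have F₃ := schroederCoeff_succ_right_mul (m + 2) k
  have F₄ := schroederCoeff_succ_left_mul m (k + 1)
  push_cast at F₁ F₂ F₃ F₄
  have hne : ((k + 2) * (k + 1) * (m + k + 2) : ℚ) ≠ 0 := by positivity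
  refine mul_right_cancel₀ hne ?_
  linear_combination (m + 3) * ((m + k + 2) * F₃ + (m + k + 3) * (m + k + 2) * F₂)
    + m * ((m - k) * F₁ - (k + 2) * (k + 1) * F₄) - (2 * m + 3) * (m + k + 2) * F₁

theorem schroederS_eq_sum_range {n N : ℕ} (h : n < N) (z : ℚ) :
    schroederS n z = ∑ k ∈ range N, schroederCoeff n k * z ^ k := by
  rw [schroederS]
  refine (sum_congr rfl fun k _ ↦ by rw [schroederCoeff]; ring).trans
    (sum_subset (range_subset_range.2 h) fun k _ hk ↦ ?_)
  rw [schroederCoeff_eq_zero_of_lt (by simpa using hk), zero_mul]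

theorem schroederS_recurrence (m : ℕ) (z : ℚ) :
    (m + 3) * schroederS (m + 2) z =
      (2 * m + 3) * (1 + 2 * z) * schroederS (m + 1) z - m * schroederS m z := by
  have hz : z * ∑ k ∈ range (m + 3), schroederCoeff (m + 1) k * z ^ k =
      ∑ k ∈ range (m + 2), schroederCoeff (m + 1) k * z ^ (k + 1) := by
    rw [mul_sum, sum_range_succ, schroederCoeff_eq_zero_of_lt (by omega), zero_mul, mul_zero,
      add_zero]
    exact sum_congr rfl fun k _ ↦ by ring
  have hcoeff : ∑ k ∈ range (m + 2),
      ((m + 3) * schroederCoeff (m + 2) (k + 1) + m * schroederCoeff m (k + 1)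
        - (2 * m + 3) * (schroederCoeff (m + 1) (k + 1) + 2 * schroederCoeff (m + 1) k))
        * z ^ (k + 1) = 0 :=
    sum_eq_zero fun k _ ↦ by rw [schroederCoeff_recurrence, sub_self, zero_mul]
  simp only [sub_mul, add_mul, mul_add, sum_sub_distrib, sum_add_distrib, mul_assoc,
    ← mul_sum] at hcoeff
  rw [schroederS_eq_sum_range (N := m + 3) (by omega),
    schroederS_eq_sum_range (N := m + 3) (by omega), schroederS_eq_sum_range (N := m + 3) (by omega)]
  simp only [sum_range_succ' _ (m + 2), schroederCoeff_zero_right] at hz ⊢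
  linear_combination hcoeff - 2 * (2 * m + 3) * hz

theorem schroederCoeff_eq_choose_mul_catalan (n k : ℕ) :
    schroederCoeff n k = ((n + k).choose (2 * k) * catalan k : ℕ) := by
  have hchoose : (n + k).choose (2 * k) * (2 * k).choose k = (n + k).choose k * n.choose k := by
    rw [Nat.choose_mul (by omega), Nat.add_sub_cancel, show 2 * k - k = k by omega]
  have hnat : (n + k).choose (2 * k) * catalan k * (k + 1) = n.choose k * (n + k).choose k := by
    rw [mul_assoc, mul_comm (catalan k), succ_mul_catalan_eq_centralBinom,
      Nat.centralBinom_eq_two_mul_choose, hchoose, mul_comm]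
  rw [schroederCoeff, eq_comm, eq_div_iff (by positivity)]
  exact_mod_cast hnat

theorem exists_schroederS_intCast_eq (n : ℕ) (z : ℤ) : ∃ s : ℤ, schroederS n z = s :=
  ⟨∑ k ∈ range (n + 1), ((n + k).choose (2 * k) * catalan k : ℕ) * z ^ k, by
    rw [schroederS_eq_sum_range (lt_add_one n)]
    simp [schroederCoeff_eq_choose_mul_catalan]⟩

theorem pow_mul_schroederS_recurrence {ε : ℚ} (hε : ε ^ 2 = 1) (z : ℚ) (m : ℕ) :
    (m + 3) * (ε ^ (m + 2) * schroederS (m + 2) z) =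
      ε * (1 + 2 * z) * (2 * m + 3) * (ε ^ (m + 1) * schroederS (m + 1) z)
        - m * (ε ^ m * schroederS m z) := by
  linear_combination ε ^ (m + 2) * schroederS_recurrence m z - m * ε ^ m * schroederS m z * hε

section Adjoint

variable {K : Type*} [CommRing K]

def schroederAdjoint (b : K) (x : K → K) (t : K) : K :=
  t * x t - b * (2 * t + 1) * x (t - 1) + (t + 1) * x (t - 2)

theorem sum_range_succ_schroederAdjoint_mul {a : ℕ → K} {b : K}
    (ha : ∀ m : ℕ, (m + 3 : K) * a (m + 2) = b * (2 * m + 3) * a (m + 1) - m * a m)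
    {x : K → K} (hx₁ : x (-1) = 0) (hx₂ : x (-2) = 0) (N : ℕ) :
    ∑ k ∈ range (N + 1), schroederAdjoint b x k * a k =
      N * x N * a N - (N + 2) * x (N - 1) * a (N + 1) := by
  induction N with
  | zero => simp [schroederAdjoint, hx₁, hx₂]
  | succ N ih =>
    rw [sum_range_succ, ih, schroederAdjoint]
    push_cast
    rw [show (N : K) + 1 - 1 = N by ring, show (N : K) + 1 - 2 = N - 1 by ring]
    linear_combination x N * ha N

end Adjoint

theorem adjoint_sum_eq (ε : ℚ) (hε : ε = 1 ∨ ε = -1) (z : ℤ)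
    (y : Polynomial ℤ)
    (x : ℚ → ℚ) (hx : ∀ t : ℚ, x t = Polynomial.aeval t y * (t + 1) * (t + 2))
    (G : ℚ → ℚ)
    (hG : ∀ t : ℚ, G t = t * x t - ε * (2 * t + 1) * (1 + 2 * (z : ℚ)) * x (t - 1)
        + (t + 1) * x (t - 2))
    (n : ℤ) (hn : 1 < n) :
    (∑ k ∈ Finset.range n.toNat, G (k : ℚ) * ε ^ k * schroederS k (z : ℚ))
      = (n : ℚ) * ((n : ℚ) ^ 2 - 1) *
          (Polynomial.aeval ((n : ℚ) - 1) y * ε ^ (n - 1).toNat * schroederS (n - 1).toNat (z : ℚ)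
            - Polynomial.aeval ((n : ℚ) - 2) y * ε ^ n.toNat * schroederS n.toNat (z : ℚ)) ∧
    ∃ m : ℤ,
      (∑ k ∈ Finset.range n.toNat, G (k : ℚ) * ε ^ k * schroederS k (z : ℚ))
        = ((n * (n ^ 2 - 1) : ℤ) : ℚ) * m := by
  obtain ⟨N, rfl⟩ : ∃ N : ℕ, n = N + 1 := ⟨(n - 1).toNat, by omega⟩
  obtain ⟨e, rfl⟩ : ∃ e : ℤ, ε = e := by
    rcases hε with rfl | rfl
    exacts [⟨1, by simp⟩, ⟨-1, by simp⟩]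
  have hG' : G = schroederAdjoint ((e : ℚ) * (1 + 2 * z)) x :=
    funext fun t ↦ by rw [hG, schroederAdjoint]; ring
  have he : (e : ℚ) ^ 2 = 1 := by rcases hε with h | h <;> simp [h]
  have hsum := sum_range_succ_schroederAdjoint_mul
    (a := fun k ↦ (e : ℚ) ^ k * schroederS k z) (pow_mul_schroederS_recurrence he z)
    (by rw [hx]; ring : x (-1) = 0) (by rw [hx]; ring : x (-2) = 0) N
  simp only [← mul_assoc, ← hG'] at hsum
  have hy₁ : Polynomial.aeval (N : ℚ) y = (Polynomial.aeval (N : ℤ) y : ℤ) := by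
    simpa using Polynomial.aeval_algebraMap_apply_eq_algebraMap_eval (A := ℚ) (N : ℤ) y
  have hy₂ : Polynomial.aeval ((N : ℚ) - 1) y = (Polynomial.aeval (N - 1 : ℤ) y : ℤ) := by
    simpa using Polynomial.aeval_algebraMap_apply_eq_algebraMap_eval (A := ℚ) (N - 1 : ℤ) y
  obtain ⟨s₁, hs₁⟩ := exists_schroederS_intCast_eq N z
  obtain ⟨s₂, hs₂⟩ := exists_schroederS_intCast_eq (N + 1) z
  rw [show (N + 1 : ℤ).toNat = N + 1 by omega, show (N + 1 - 1 : ℤ).toNat = N by omega, hsum,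
    hx, hx]
  push_cast
  rw [add_sub_cancel_right, show (N : ℚ) + 1 - 2 = N - 1 by ring, hy₁, hy₂, hs₁, hs₂]
  refine ⟨by ring, Polynomial.aeval (N : ℤ) y * e ^ N * s₁
    - Polynomial.aeval (N - 1 : ℤ) y * e ^ (N + 1) * s₂, by push_cast; ring⟩
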